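/- arXiv:1912.12433 — 4 statements merged into one kernel-verified Lean document; each statement's English description precedes it below -/
import Mathlib

section
/- Let B > 0, θ ∈ (0,1), and c = θ(1-θ)z²/(2B) with z ≠ 0. Then for s < t, ∫_s^t (t-τ)^{-1/2}(τ-s)^{-3/2} exp(-c/(τ-s)) dτ = (2πB/(θ(1-θ)(t-s)))^{1/2} · (1/|z|) · exp(-θ(1-θ)z²/(2B(t-s))). -/
open Real MeasureTheory Filter Set Topology intervalIntegral

/-! With `φ u = √(c/u - c/T)` one has `φ' u = -(√(cT)/2) (T-u)^{-1/2} u^{-3/2}` and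
`exp (-φ u ^ 2) = exp (c/T) exp (-c/u)`, so the integrand on `(0, T)` is the derivative of
`-(2 exp (-c/T) / √(cT)) ∫₀^{φ u} exp (-y²) dy`. This primitive vanishes at `u = T` and tends
to `-(2 exp (-c/T) / √(cT)) · √π/2` as `u → 0⁺`, since `φ u → ∞`. The integrand is
nonnegative, so its integrability comes for free and the fundamental theorem of calculus gives
`√(π/(cT)) exp (-c/T)`; the theorem is the case `c = θ(1-θ)z²/(2B)`, `T = t - s`. -/

theorem intervalIntegral.integral_eq_sub_of_hasDerivAt_of_tendsto_of_nonneg {f f' : ℝ → ℝ}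
    {a b fa : ℝ} (hab : a < b) (hcont : ContinuousOn f (Ioc a b)) (ha : Tendsto f (𝓝[>] a) (𝓝 fa))
    (hderiv : ∀ x ∈ Ioo a b, HasDerivAt f (f' x) x) (hpos : ∀ x ∈ Ioo a b, 0 ≤ f' x) :
    ∫ y in a..b, f' y = f b - fa := by
  classical
  set F := Function.update f a fa
  have hFcont : ContinuousOn F (Icc a b) := by
    rw [continuousOn_update_iff, Icc_sdiff_left]
    exact ⟨hcont, fun _ => ha.mono_left (nhdsWithin_mono _ Ioc_subset_Ioi_self)⟩
  have hFderiv : ∀ x ∈ Ioo a b, HasDerivAt F (f' x) x := fun x hx =>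
    (hderiv x hx).congr_of_eventuallyEq <| by
      filter_upwards [Ioi_mem_nhds hx.1] with y hy using Function.update_of_ne hy.ne' _ _
  have hint : IntervalIntegrable f' volume a b :=
    (intervalIntegrable_iff_integrableOn_Ioc_of_le hab.le).2
      (integrableOn_deriv_of_nonneg hFcont hFderiv hpos)
  simpa [F, hab.ne'] using integral_eq_sub_of_hasDerivAt_of_le hab.le hFcont hFderiv hint

noncomputable def gaussPartialIntegral (x : ℝ) : ℝ := ∫ y in (0:ℝ)..x, exp (-y ^ 2)

theorem hasDerivAt_gaussPartialIntegral (x : ℝ) :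
    HasDerivAt gaussPartialIntegral (exp (-x ^ 2)) x := by
  have hc : Continuous fun y : ℝ => exp (-y ^ 2) := by fun_prop
  exact integral_hasDerivAt_right (hc.intervalIntegrable _ _)
    (hc.stronglyMeasurableAtFilter _ _) hc.continuousAt

@[fun_prop]
theorem continuous_gaussPartialIntegral : Continuous gaussPartialIntegral :=
  continuous_iff_continuousAt.2 fun x => (hasDerivAt_gaussPartialIntegral x).continuousAt

theorem gaussPartialIntegral_zero : gaussPartialIntegral 0 = 0 := integral_same

theorem tendsto_gaussPartialIntegral_atTop :
    Tendsto gaussPartialIntegral atTop (𝓝 (√π / 2)) := by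
  have h := intervalIntegral_tendsto_integral_Ioi (0:ℝ)
    (integrable_exp_neg_mul_sq one_pos).integrableOn tendsto_id
  rw [integral_gaussian_Ioi] at h
  simp only [id, neg_one_mul, div_one] at h
  exact h

theorem rpow_neg_half_eq_inv_sqrt {x : ℝ} (hx : 0 ≤ x) : x ^ (-(1:ℝ)/2) = (√x)⁻¹ := by
  rw [neg_div, rpow_neg hx, sqrt_eq_rpow]

theorem rpow_neg_three_halves_eq_inv_mul_sqrt {x : ℝ} (hx : 0 < x) :
    x ^ (-(3:ℝ)/2) = (x * √x)⁻¹ := by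
  rw [show -(3:ℝ)/2 = -(1 + 1/2) by norm_num, rpow_neg hx.le, rpow_add hx, rpow_one,
    sqrt_eq_rpow]

theorem hasDerivAt_sqrt_div_sub_div {c T u : ℝ} (hc : 0 < c) (hu : 0 < u) (huT : u < T) :
    HasDerivAt (fun v => √(c / v - c / T))
      (-(√(c * T) / 2) * ((T - u) ^ (-(1:ℝ)/2) * u ^ (-(3:ℝ)/2))) u := by
  have hT : 0 < T := hu.trans huT
  have hψ : c / u - c / T = c * (T - u) / (u * T) := by field_simp
  have hpos : 0 < c / u - c / T := by rw [hψ]; have := sub_pos.2 huT; positivity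
  have h := (((hasDerivAt_inv hu.ne').const_mul c).sub_const (c / T)).sqrt hpos.ne'
  convert h using 1
  · ext v; simp [div_eq_mul_inv]
  rw [← div_eq_mul_inv c u, hψ, sqrt_div (by have := sub_pos.2 huT; positivity),
    sqrt_mul hc.le, sqrt_mul hu.le, sqrt_mul hc.le, rpow_neg_half_eq_inv_sqrt (sub_pos.2 huT).le,
    rpow_neg_three_halves_eq_inv_mul_sqrt hu]
  have : 0 < √(T - u) := sqrt_pos.2 (sub_pos.2 huT)
  have := sqrt_pos.2 hc
  have := sqrt_pos.2 hu
  have := sqrt_pos.2 hT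
  field_simp
  rw [sq_sqrt hu.le, sq_sqrt hc.le]
  ring

theorem hasDerivAt_gaussPartialIntegral_sqrt_div_sub_div {c T u : ℝ} (hc : 0 < c) (hu : 0 < u)
    (huT : u < T) :
    HasDerivAt
      (fun v => -(2 * exp (-c / T) / √(c * T)) * gaussPartialIntegral (√(c / v - c / T)))
      ((T - u) ^ (-(1:ℝ)/2) * u ^ (-(3:ℝ)/2) * exp (-c / u)) u := by
  have h := ((hasDerivAt_gaussPartialIntegral _).comp u
    (hasDerivAt_sqrt_div_sub_div hc hu huT)).const_mul (-(2 * exp (-c / T) / √(c * T)))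
  refine h.congr_deriv ?_
  have hψ : 0 ≤ c / u - c / T := sub_nonneg.2 (div_le_div_of_nonneg_left hc.le hu huT.le)
  have hexp : exp (-√(c / u - c / T) ^ 2) = exp (c / T) * exp (-c / u) := by
    rw [sq_sqrt hψ, ← exp_add]; ring_nf
  have hcT : 0 < √(c * T) := sqrt_pos.2 (mul_pos hc (hu.trans huT))
  rw [hexp]
  field_simp
  rw [← exp_add, neg_add_cancel, exp_zero, one_mul]

theorem integral_sub_rpow_mul_rpow_mul_exp_neg_div {c T : ℝ} (hc : 0 < c) (hT : 0 < T) :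
    ∫ u in 0..T, (T - u) ^ (-(1:ℝ)/2) * u ^ (-(3:ℝ)/2) * exp (-c / u)
      = √(π / (c * T)) * exp (-c / T) := by
  set K := 2 * exp (-c / T) / √(c * T)
  have hcont : ContinuousOn (fun v => -K * gaussPartialIntegral (√(c / v - c / T))) (Ioc 0 T) := by
    fun_prop (disch := (rintro v ⟨hv, -⟩; exact hv.ne'))
  have hlim : Tendsto (fun v => -K * gaussPartialIntegral (√(c / v - c / T))) (𝓝[>] 0)
      (𝓝 (-K * (√π / 2))) := by
    have hψ : Tendsto (fun v => c / v - c / T) (𝓝[>] 0) atTop := by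
      simpa [div_eq_mul_inv, sub_eq_add_neg] using
        (tendsto_inv_nhdsGT_zero.const_mul_atTop hc).atTop_add tendsto_const_nhds
    exact (tendsto_gaussPartialIntegral_atTop.comp (tendsto_sqrt_atTop.comp hψ)).const_mul _
  rw [integral_eq_sub_of_hasDerivAt_of_tendsto_of_nonneg hT hcont hlim
    (fun u hu => hasDerivAt_gaussPartialIntegral_sqrt_div_sub_div hc hu.1 hu.2)
    (fun u hu => by have := sub_pos.2 hu.2; have := hu.1; positivity)]
  rw [sub_self, sqrt_zero, gaussPartialIntegral_zero, sqrt_div pi_pos.le]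
  have : 0 < √(c * T) := sqrt_pos.2 (mul_pos hc hT)
  simp only [K]
  field_simp
  ring

theorem singular_convolution_closed_form (B θ z s t : ℝ) (hB : 0 < B)
    (hθ0 : 0 < θ) (hθ1 : θ < 1) (hz : z ≠ 0) (hst : s < t) :
    (∫ τ in s..t, (t - τ) ^ (-(1:ℝ)/2) * (τ - s) ^ (-(3:ℝ)/2) *
        Real.exp (-(θ * (1 - θ) * z ^ 2 / (2 * B)) / (τ - s)))
      = (2 * Real.pi * B / (θ * (1 - θ) * (t - s))) ^ ((1:ℝ)/2) * (1 / |z|) *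
        Real.exp (-(θ * (1 - θ) * z ^ 2) / (2 * B * (t - s))) := by
  set c := θ * (1 - θ) * z ^ 2 / (2 * B)
  have hθ1' : 0 < 1 - θ := sub_pos.2 hθ1
  have hc : 0 < c := by positivity
  have hT : 0 < t - s := sub_pos.2 hst
  have hshift := integral_comp_sub_right (a := s) (b := t)
    (fun u => ((t - s) - u) ^ (-(1:ℝ)/2) * u ^ (-(3:ℝ)/2) * exp (-c / u)) s
  simp only [sub_sub_sub_cancel_right, sub_self] at hshift
  rw [hshift, integral_sub_rpow_mul_rpow_mul_exp_neg_div hc hT, ← sqrt_eq_rpow]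
  have hπ : π / (c * (t - s)) = 2 * π * B / (θ * (1 - θ) * (t - s)) / z ^ 2 := by
    simp only [c]
    field_simp
  rw [hπ, sqrt_div' _ (sq_nonneg z), sqrt_sq_eq_abs, one_div, ← div_eq_mul_inv]
  congr 2
  simp only [c]
  field_simp
end

section
/- Fix 0 < α < 1 and constants C₁ > 0, C₀ > 0, 0 ≤ m₀ < 1. Suppose functions V^{(k)}(s) on [0,t) satisfy |V^{(0)}(s)| ≤ C₀(t-s)^{-1/2} and the recursive bound |V^{(k)}(s)| ≤ ∫_s^t [2C₁(τ-s)^{-1+α/2} + m₀ π^{-1}(t-s)^{1/2}(τ-s)^{-3/2}·g(s,τ)] |V^{(k-1)}(τ)| dτ, where the second term's contribution is bounded so that each iteration multiplies by at most (2C₁Γ(α/2)Γ(1/2)/Γ((1+(k))α/2 + 1/2))-type factors plus m₀. Then by induction |V^{(k)}(s)| ≤ C₀(t-s)^{-1/2} Σ_{n=0}^k C(k,n) h_{s,t}^{(k-n)} m₀^n, with h_{s,t}^{(k)} = (2C₁Γ(α/2))^k Γ(1/2)(t-s)^{kα/2}/Γ((1+kα)/2). -/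
/-!
Write `h_j(s)` for the `j`-th iterated kernel `A ^ j Γ(1/2) (t - s) ^ (jα/2) / Γ((1 + jα)/2)`,
with `A = 2 C₁ Γ(α/2)`. The Beta integral
`∫ₛᵗ (τ - s) ^ (α/2 - 1) (t - τ) ^ ((1 + jα)/2 - 1) dτ = (t - s) ^ ((1 + (j+1)α)/2 - 1) B(α/2, (1 + jα)/2)`
shows that one application of the Volterra kernel `2 C₁ (τ - s) ^ (α/2 - 1)` sends
`(t - τ) ^ (-1/2) h_j(τ)` exactly to `(t - s) ^ (-1/2) h_{j+1}(s)`. Applied termwise to the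
inductive bound `C₀ (t - s) ^ (-1/2) ∑ₙ C(k, n) h_{k-n} m₀ ⁿ`, this shifts every index by one,
and adding the `m₀`-term of the recursion completes the bound at `k + 1` by Pascal's rule.
-/

open Real MeasureTheory Finset intervalIntegral

lemma integral_rpow_mul_sub_rpow_eq_beta {p q a : ℝ} (hp : 0 < p) (hq : 0 < q) (ha : 0 < a) :
    ∫ x in 0..a, x ^ (p - 1) * (a - x) ^ (q - 1) =
      a ^ (p + q - 1) * ProbabilityTheory.beta p q := by
  have hcast : ((∫ x in 0..a, x ^ (p - 1) * (a - x) ^ (q - 1) : ℝ) : ℂ) =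
      ∫ x in 0..a, (x : ℂ) ^ ((p : ℂ) - 1) * ((a : ℂ) - x) ^ ((q : ℂ) - 1) := by
    rw [← intervalIntegral.integral_ofReal]
    refine integral_congr fun x hx => ?_
    rw [Set.uIcc_of_le ha.le] at hx
    push_cast [Complex.ofReal_cpow hx.1, Complex.ofReal_cpow (sub_nonneg.2 hx.2)]
    rfl
  apply Complex.ofReal_injective
  rw [hcast, Complex.betaIntegral_scaled _ _ ha,
    Complex.betaIntegral_eq_Gamma_mul_div _ _ (by simpa) (by simpa), ProbabilityTheory.beta]
  push_cast [Complex.ofReal_cpow ha.le, Complex.Gamma_ofReal]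
  rw [← Complex.ofReal_add, Complex.Gamma_ofReal]

section BetaOnInterval

variable {p q s t : ℝ}

lemma integral_sub_rpow_mul_sub_rpow_eq_beta (hp : 0 < p) (hq : 0 < q) (hst : s < t) :
    ∫ τ in s..t, (τ - s) ^ (p - 1) * (t - τ) ^ (q - 1) =
      (t - s) ^ (p + q - 1) * ProbabilityTheory.beta p q := by
  have h := integral_comp_sub_right (fun x => x ^ (p - 1) * (t - s - x) ^ (q - 1)) s
    (a := s) (b := t)
  simp only [sub_self] at h
  rw [← integral_rpow_mul_sub_rpow_eq_beta hp hq (sub_pos.2 hst), ← h]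
  simp only [sub_sub_sub_cancel_right]

lemma intervalIntegrable_sub_rpow_mul_sub_rpow (hp : 0 < p) (hq : 0 < q) (hst : s < t) :
    IntervalIntegrable (fun τ => (τ - s) ^ (p - 1) * (t - τ) ^ (q - 1)) volume s t := by
  -- a non-integrable function would have integral `0`, but the Beta integral is positive
  apply intervalIntegrable_of_integral_ne_zero
  rw [integral_sub_rpow_mul_sub_rpow_eq_beta hp hq hst]
  exact (mul_pos (rpow_pos_of_pos (sub_pos.2 hst) _) (ProbabilityTheory.beta_pos hp hq)).ne'

end BetaOnInterval

lemma integral_le_integral_of_nonneg_of_le_on_Ioo {f g : ℝ → ℝ} {s t : ℝ} (hst : s ≤ t)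
    (hg : IntervalIntegrable g volume s t) (hfg : ∀ τ ∈ Set.Ioo s t, 0 ≤ f τ ∧ f τ ≤ g τ) :
    ∫ τ in s..t, f τ ≤ ∫ τ in s..t, g τ := by
  rw [integral_of_le hst, integral_of_le hst, integral_Ioc_eq_integral_Ioo,
    integral_Ioc_eq_integral_Ioo]
  exact integral_mono_of_nonneg
    (ae_restrict_of_forall_mem measurableSet_Ioo fun τ hτ => (hfg τ hτ).1)
    (hg.1.mono_set Set.Ioo_subset_Ioc_self)
    (ae_restrict_of_forall_mem measurableSet_Ioo fun τ hτ => (hfg τ hτ).2)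

def binomSum {R : Type*} [CommSemiring R] (h : ℕ → R) (m : R) (k : ℕ) : R :=
  ∑ n ∈ range (k + 1), (k.choose n : R) * h (k - n) * m ^ n

lemma binomSum_succ {R : Type*} [CommSemiring R] (h : ℕ → R) (m : R) (k : ℕ) :
    binomSum h m (k + 1) = binomSum (fun j => h (j + 1)) m k + m * binomSum h m k := by
  have pascal := sum_choose_succ_mul (fun n j => h j * m ^ n) k
  simp only [← mul_assoc] at pascal
  rw [binomSum, pascal, binomSum, binomSum, mul_sum]
  congr 1
  · refine sum_congr rfl fun n hn => ?_
    rw [Nat.sub_add_comm (mem_range_succ_iff.1 hn)]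
  · refine sum_congr rfl fun n _ => ?_
    ring

noncomputable def iterKernel (A α t : ℝ) (k : ℕ) (s : ℝ) : ℝ :=
  A ^ k * Gamma (1 / 2) * (t - s) ^ ((k : ℝ) * α / 2) / Gamma ((1 + (k : ℝ) * α) / 2)

lemma iterKernel_zero (A α t s : ℝ) : iterKernel A α t 0 s = 1 := by
  simp [iterKernel, (Gamma_pos_of_pos (by norm_num : (0 : ℝ) < 2⁻¹)).ne']

section Convolution

variable {c α s t : ℝ}

lemma eqOn_convolution_iterKernel (j : ℕ) :
    Set.EqOn (fun τ => c * (τ - s) ^ (-1 + α / 2) *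
        ((t - τ) ^ (-(1 : ℝ) / 2) * iterKernel (c * Gamma (α / 2)) α t j τ))
      (fun τ => c * (c * Gamma (α / 2)) ^ j * Gamma (1 / 2) / Gamma ((1 + j * α) / 2) *
        ((τ - s) ^ (α / 2 - 1) * (t - τ) ^ ((1 + j * α) / 2 - 1)))
      (Set.Ioo s t) := by
  intro τ hτ
  have hexp : (1 + j * α) / 2 - 1 = -(1 : ℝ) / 2 + j * α / 2 := by ring
  simp only [iterKernel]
  rw [hexp, rpow_add (sub_pos.2 hτ.2), show -1 + α / 2 = α / 2 - 1 by ring]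
  ring

lemma convolution_binomSum_iterKernel_eq_sum (C₀ m : ℝ) (k : ℕ) (τ : ℝ) :
    c * (τ - s) ^ (-1 + α / 2) * (C₀ * (t - τ) ^ (-(1 : ℝ) / 2) *
        binomSum (fun j => iterKernel (c * Gamma (α / 2)) α t j τ) m k) =
      ∑ n ∈ range (k + 1), C₀ * k.choose n * m ^ n * (c * (τ - s) ^ (-1 + α / 2) *
        ((t - τ) ^ (-(1 : ℝ) / 2) * iterKernel (c * Gamma (α / 2)) α t (k - n) τ)) := by
  simp only [binomSum, mul_sum]
  exact sum_congr rfl fun n _ => by ring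

variable (hα : 0 < α) (hst : s < t)
include hα hst

lemma intervalIntegrable_convolution_iterKernel (j : ℕ) :
    IntervalIntegrable (fun τ => c * (τ - s) ^ (-1 + α / 2) *
        ((t - τ) ^ (-(1 : ℝ) / 2) * iterKernel (c * Gamma (α / 2)) α t j τ)) volume s t := by
  refine IntervalIntegrable.congr_uIoo ?_
    (Set.uIoo_of_le hst.le ▸ (eqOn_convolution_iterKernel j).symm)
  exact (intervalIntegrable_sub_rpow_mul_sub_rpow (by positivity) (by positivity) hst).const_mul _

lemma integral_convolution_iterKernel (j : ℕ) :
    ∫ τ in s..t, c * (τ - s) ^ (-1 + α / 2) *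
        ((t - τ) ^ (-(1 : ℝ) / 2) * iterKernel (c * Gamma (α / 2)) α t j τ) =
      (t - s) ^ (-(1 : ℝ) / 2) * iterKernel (c * Gamma (α / 2)) α t (j + 1) s := by
  rw [integral_congr_uIoo (Set.uIoo_of_le hst.le ▸ eqOn_convolution_iterKernel j),
    intervalIntegral.integral_const_mul,
    integral_sub_rpow_mul_sub_rpow_eq_beta (by positivity) (by positivity) hst,
    ProbabilityTheory.beta, iterKernel]
  have hb : α / 2 + (1 + j * α) / 2 = (1 + ((j + 1 : ℕ) : ℝ) * α) / 2 := by push_cast; ring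
  have he : (1 + ((j + 1 : ℕ) : ℝ) * α) / 2 - 1 = -(1 : ℝ) / 2 + ((j + 1 : ℕ) : ℝ) * α / 2 := by
    ring
  have hΓb : Gamma ((1 + j * α) / 2) ≠ 0 := (Gamma_pos_of_pos (by positivity)).ne'
  rw [hb, he, rpow_add (sub_pos.2 hst)]
  field_simp
  ring

lemma intervalIntegrable_convolution_binomSum_iterKernel (C₀ m : ℝ) (k : ℕ) :
    IntervalIntegrable (fun τ => c * (τ - s) ^ (-1 + α / 2) * (C₀ * (t - τ) ^ (-(1 : ℝ) / 2) *
        binomSum (fun j => iterKernel (c * Gamma (α / 2)) α t j τ) m k)) volume s t := by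
  simp only [convolution_binomSum_iterKernel_eq_sum, ← Finset.sum_fn]
  exact IntervalIntegrable.sum _ fun n _ =>
    (intervalIntegrable_convolution_iterKernel hα hst _).const_mul _

lemma integral_convolution_binomSum_iterKernel (C₀ m : ℝ) (k : ℕ) :
    ∫ τ in s..t, c * (τ - s) ^ (-1 + α / 2) * (C₀ * (t - τ) ^ (-(1 : ℝ) / 2) *
        binomSum (fun j => iterKernel (c * Gamma (α / 2)) α t j τ) m k) =
      C₀ * (t - s) ^ (-(1 : ℝ) / 2) *
        binomSum (fun j => iterKernel (c * Gamma (α / 2)) α t (j + 1) s) m k := by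
  simp only [convolution_binomSum_iterKernel_eq_sum]
  rw [integral_finsetSum fun n _ =>
    (intervalIntegrable_convolution_iterKernel hα hst _).const_mul _]
  simp only [intervalIntegral.integral_const_mul,
    integral_convolution_iterKernel hα hst, binomSum, mul_sum]
  exact sum_congr rfl fun n _ => by ring

end Convolution

theorem successive_approximation_bound_general (α C₀ C₁ m₀ t : ℝ)
    (hα0 : 0 < α) (hC₁ : 0 < C₁)
    (V : ℕ → ℝ → ℝ) (H : ℕ → ℝ → ℝ)
    (hH : ∀ (k : ℕ) (s : ℝ), H k s =
      (2 * C₁ * Real.Gamma (α/2)) ^ k * Real.Gamma (1/2) * (t - s) ^ ((k : ℝ) * α / 2) /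
        Real.Gamma ((1 + (k : ℝ) * α) / 2))
    (h0 : ∀ s ∈ Set.Ico (0:ℝ) t, |V 0 s| ≤ C₀ * (t - s) ^ (-(1:ℝ)/2))
    (hrec : ∀ (k : ℕ), ∀ s ∈ Set.Ico (0:ℝ) t,
      |V (k + 1) s| ≤ (∫ τ in s..t, 2 * C₁ * (τ - s) ^ (-1 + α/2) * |V k τ|)
        + m₀ * (C₀ * (t - s) ^ (-(1:ℝ)/2) *
            ∑ n ∈ Finset.range (k + 1), (k.choose n : ℝ) * H (k - n) s * m₀ ^ n)) :
    ∀ (k : ℕ), ∀ s ∈ Set.Ico (0:ℝ) t,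
      |V k s| ≤ C₀ * (t - s) ^ (-(1:ℝ)/2) *
        ∑ n ∈ Finset.range (k + 1), (k.choose n : ℝ) * H (k - n) s * m₀ ^ n := by
  obtain rfl : H = iterKernel (2 * C₁ * Gamma (α / 2)) α t := funext fun k => funext (hH k)
  change ∀ k, ∀ s ∈ Set.Ico 0 t, |V k s| ≤ C₀ * (t - s) ^ (-(1 : ℝ) / 2) *
    binomSum (fun j => iterKernel (2 * C₁ * Gamma (α / 2)) α t j s) m₀ k
  intro k
  induction k with
  | zero => simpa [binomSum, iterKernel_zero] using h0
  | succ k ih =>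
    rintro s ⟨hs0, hst⟩
    have hstep : ∫ τ in s..t, 2 * C₁ * (τ - s) ^ (-1 + α / 2) * |V k τ| ≤
        C₀ * (t - s) ^ (-(1 : ℝ) / 2) *
          binomSum (fun j => iterKernel (2 * C₁ * Gamma (α / 2)) α t (j + 1) s) m₀ k := by
      rw [← integral_convolution_binomSum_iterKernel hα0 hst]
      refine integral_le_integral_of_nonneg_of_le_on_Ioo hst.le
        (intervalIntegrable_convolution_binomSum_iterKernel hα0 hst _ _ _) fun τ hτ => ?_
      have hker : 0 ≤ 2 * C₁ * (τ - s) ^ (-1 + α / 2) :=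
        mul_nonneg (by positivity) (rpow_nonneg (sub_nonneg.2 hτ.1.le) _)
      exact ⟨mul_nonneg hker (abs_nonneg _),
        mul_le_mul_of_nonneg_left (ih τ ⟨hs0.trans hτ.1.le, hτ.2⟩) hker⟩
    calc |V (k + 1) s|
        ≤ (∫ τ in s..t, 2 * C₁ * (τ - s) ^ (-1 + α / 2) * |V k τ|) + m₀ * (C₀ *
            (t - s) ^ (-(1 : ℝ) / 2) *
              binomSum (fun j => iterKernel (2 * C₁ * Gamma (α / 2)) α t j s) m₀ k) :=
          hrec k s ⟨hs0, hst⟩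
      _ ≤ _ := add_le_add_left hstep _
      _ = _ := by rw [binomSum_succ]; ring

theorem successive_approximation_bound (α C₀ C₁ m₀ t : ℝ)
    (hα0 : 0 < α) (hα1 : α < 1) (hC₀ : 0 < C₀) (hC₁ : 0 < C₁)
    (hm0 : 0 ≤ m₀) (hm1 : m₀ < 1) (ht : 0 < t)
    (V : ℕ → ℝ → ℝ) (H : ℕ → ℝ → ℝ)
    (hH : ∀ (k : ℕ) (s : ℝ), H k s =
      (2 * C₁ * Real.Gamma (α/2)) ^ k * Real.Gamma (1/2) * (t - s) ^ ((k : ℝ) * α / 2) /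
        Real.Gamma ((1 + (k : ℝ) * α) / 2))
    (h0 : ∀ s ∈ Set.Ico (0:ℝ) t, |V 0 s| ≤ C₀ * (t - s) ^ (-(1:ℝ)/2))
    (hrec : ∀ (k : ℕ), ∀ s ∈ Set.Ico (0:ℝ) t,
      |V (k + 1) s| ≤ (∫ τ in s..t, 2 * C₁ * (τ - s) ^ (-1 + α/2) * |V k τ|)
        + m₀ * (C₀ * (t - s) ^ (-(1:ℝ)/2) *
            ∑ n ∈ Finset.range (k + 1), (k.choose n : ℝ) * H (k - n) s * m₀ ^ n)) :
    ∀ (k : ℕ), ∀ s ∈ Set.Ico (0:ℝ) t,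
      |V k s| ≤ C₀ * (t - s) ^ (-(1:ℝ)/2) *
        ∑ n ∈ Finset.range (k + 1), (k.choose n : ℝ) * H (k - n) s * m₀ ^ n :=
  successive_approximation_bound_general α C₀ C₁ m₀ t hα0 hC₁ V H hH h0 hrec
end

section
/- Let Φ₀(s,t) be continuous in s ∈ [0,t], satisfy lim_{s↑t} Φ₀(s,t) = 0, and the Hölder estimate |Φ₀(ρ,t)-Φ₀(s,t)| ≤ C‖φ‖(t-ρ)^{-(1+α)/2}(ρ-s)^{(1+α)/2} for s < ρ < t with α ∈ (0,1), together with |Φ₀(s,t)| ≤ C‖φ‖. Then Φ(s,t) := (2π)^{-1/2} ∫_s^t (ρ-s)^{-3/2}[Φ₀(ρ,t)-Φ₀(s,t)] dρ − (2/π)^{1/2}(t-s)^{-1/2}Φ₀(s,t) is well defined and satisfies |Φ(s,t)| ≤ C'‖φ‖(t-s)^{-1/2}. -/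
/-! Write `M = C‖φ‖` and split the integral at the midpoint `m = (s + t) / 2`. On `(s, m]` we have
`t - ρ ≥ (t - s) / 2`, so the Hölder estimate bounds the integrand by
`M ((t - s) / 2)^(-(1 + α) / 2) (ρ - s)^(α / 2 - 1)`, an integrable singularity whose integral is
`(2 / α) M ((t - s) / 2)^(-1/2)`. On `[m, t]` the integrand is continuous and bounded by
`2M (ρ - s)^(-3/2)`, whose integral is at most `4M ((t - s) / 2)^(-1/2)`. The boundary term is at
most `M (t - s)^(-1/2)`, and both prefactors `(2π)^(-1/2)` and `√(2/π)` are at most `1`. -/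

open Real MeasureTheory

open Set intervalIntegral

open scoped Interval

section SingularIntegrals

variable {f : ℝ → ℝ} {a b c K p r : ℝ}

theorem integral_rpow_sub_left (hr : -1 < r) (a b : ℝ) :
    ∫ x in a..b, (x - a) ^ r = (b - a) ^ (r + 1) / (r + 1) := by
  rw [integral_comp_sub_right (fun x => x ^ r), sub_self, integral_rpow (Or.inl hr),
    zero_rpow (by linarith), sub_zero]

theorem intervalIntegrable_rpow_sub_left (hr : -1 < r) (a b : ℝ) :
    IntervalIntegrable (fun x => (x - a) ^ r) volume a b := by
  simpa using (intervalIntegrable_rpow' hr (a := 0) (b := b - a)).comp_sub_right a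

theorem ae_restrict_uIoc_of_forall_Ioc {P : ℝ → Prop} (hab : a ≤ b) (h : ∀ x ∈ Ioc a b, P x) :
    ∀ᵐ x ∂volume.restrict (Ι a b), P x := by
  rw [uIoc_of_le hab]
  exact (ae_restrict_iff' measurableSet_Ioc).2 (.of_forall h)

theorem intervalIntegrable_of_abs_le_mul_rpow_sub_left (hr : -1 < r) (hab : a ≤ b)
    (hf : ContinuousOn f (Ioc a b)) (hle : ∀ x ∈ Ioc a b, |f x| ≤ K * (x - a) ^ r) :
    IntervalIntegrable f volume a b := by
  refine ((intervalIntegrable_rpow_sub_left hr a b).const_mul K).mono_fun' ?_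
    (ae_restrict_uIoc_of_forall_Ioc hab hle)
  rw [uIoc_of_le hab]
  exact hf.aestronglyMeasurable measurableSet_Ioc

theorem abs_integral_le_of_abs_le_mul_rpow_sub_left (hr : -1 < r) (hK : 0 ≤ K) (hab : a ≤ b)
    (hle : ∀ x ∈ Ioc a b, |f x| ≤ K * (x - a) ^ r) :
    |∫ x in a..b, f x| ≤ K * (b - a) ^ (r + 1) / (r + 1) := by
  have hint := (intervalIntegrable_rpow_sub_left hr a b).const_mul K
  have key := norm_integral_le_abs_of_norm_le (f := f) (ae_restrict_uIoc_of_forall_Ioc hab hle) hint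
  have hval : 0 ≤ K * ((b - a) ^ (r + 1) / (r + 1)) :=
    mul_nonneg hK (div_nonneg (rpow_nonneg (sub_nonneg.2 hab) _) (by linarith))
  rwa [intervalIntegral.integral_const_mul, integral_rpow_sub_left hr, abs_of_nonneg hval,
    ← mul_div_assoc] at key

theorem integral_rpow_le_of_lt_neg_one (hp : p < -1) (ha : 0 < a) (hab : a ≤ b) :
    ∫ x in a..b, x ^ p ≤ a ^ (p + 1) / -(p + 1) := by
  have h0 : (0 : ℝ) ∉ uIcc a b := by
    rw [uIcc_of_le hab]; exact fun h => (ha.trans_le h.1).false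
  rw [integral_rpow (Or.inr ⟨hp.ne, h0⟩), ← neg_div_neg_eq, neg_sub]
  gcongr
  · linarith
  · exact sub_le_self _ (rpow_nonneg (ha.le.trans hab) _)

theorem abs_integral_le_of_abs_le_mul_rpow_sub_of_lt_neg_one (hp : p < -1) (hK : 0 ≤ K)
    (hca : c < a) (hab : a ≤ b) (hle : ∀ x ∈ Ioc a b, |f x| ≤ K * (x - c) ^ p) :
    |∫ x in a..b, f x| ≤ K * (a - c) ^ (p + 1) / -(p + 1) := by
  have hint : IntervalIntegrable (fun x => K * (x - c) ^ p) volume a b := by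
    refine ContinuousOn.intervalIntegrable ?_
    rw [uIcc_of_le hab]
    exact continuousOn_const.mul ((continuousOn_id.sub continuousOn_const).rpow_const
      fun x hx => Or.inl (sub_pos.2 (hca.trans_le hx.1)).ne')
  have key := norm_integral_le_abs_of_norm_le (f := f) (ae_restrict_uIoc_of_forall_Ioc hab hle) hint
  have hval : ∫ x in a..b, (x - c) ^ p ≤ (a - c) ^ (p + 1) / -(p + 1) := by
    rw [integral_comp_sub_right (fun x => x ^ p)]
    exact integral_rpow_le_of_lt_neg_one hp (sub_pos.2 hca) (by linarith)
  have hnonneg : 0 ≤ ∫ x in a..b, (x - c) ^ p :=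
    integral_nonneg hab fun x hx => rpow_nonneg (by linarith [hx.1]) p
  rw [intervalIntegral.integral_const_mul, abs_of_nonneg (mul_nonneg hK hnonneg)] at key
  rw [mul_div_assoc]
  exact key.trans (mul_le_mul_of_nonneg_left hval hK)

end SingularIntegrals

theorem rpow_neg_one_half_div_two {x : ℝ} (hx : 0 ≤ x) :
    (x / 2) ^ (-(1 : ℝ) / 2) = √2 * x ^ (-(1 : ℝ) / 2) := by
  rw [div_rpow hx zero_le_two, neg_div, rpow_neg zero_le_two, div_inv_eq_mul,
    ← sqrt_eq_rpow, mul_comm]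

noncomputable def holmgrenIntegrand (Φ₀ : ℝ → ℝ) (s ρ : ℝ) : ℝ :=
  (ρ - s) ^ (-(3 : ℝ) / 2) * (Φ₀ ρ - Φ₀ s)

section HolmgrenIntegrand

variable {Φ₀ : ℝ → ℝ} {M β s t : ℝ}

theorem continuousOn_holmgrenIntegrand (hΦ : ContinuousOn Φ₀ (Icc s t)) {A : Set ℝ}
    (hA : A ⊆ Ioc s t) : ContinuousOn (holmgrenIntegrand Φ₀ s) A :=
  ((continuousOn_id.sub continuousOn_const).rpow_const fun _ hρ =>
    Or.inl (sub_pos.2 (hA hρ).1).ne').mul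
    ((hΦ.mono (hA.trans Ioc_subset_Icc_self)).sub continuousOn_const)

theorem abs_holmgrenIntegrand_le_of_holder (hβ : 0 ≤ β) (hM : 0 ≤ M) {ρ : ℝ}
    (hρ : ρ ∈ Ioc s ((s + t) / 2))
    (hH : |Φ₀ ρ - Φ₀ s| ≤ M * (t - ρ) ^ (-β) * (ρ - s) ^ β) :
    |holmgrenIntegrand Φ₀ s ρ| ≤ M * ((t - s) / 2) ^ (-β) * (ρ - s) ^ (β - 3 / 2) := by
  have hρs : 0 < ρ - s := sub_pos.2 hρ.1
  have hmono : (t - ρ) ^ (-β) ≤ ((t - s) / 2) ^ (-β) :=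
    rpow_le_rpow_of_nonpos (by linarith [hρ.1, hρ.2]) (by linarith [hρ.2]) (neg_nonpos.2 hβ)
  calc |holmgrenIntegrand Φ₀ s ρ| = (ρ - s) ^ (-(3 : ℝ) / 2) * |Φ₀ ρ - Φ₀ s| := by
        rw [holmgrenIntegrand, abs_mul, abs_of_pos (rpow_pos_of_pos hρs _)]
    _ ≤ (ρ - s) ^ (-(3 : ℝ) / 2) * (M * ((t - s) / 2) ^ (-β) * (ρ - s) ^ β) := by
        gcongr
        exact hH.trans (by gcongr)
    _ = M * ((t - s) / 2) ^ (-β) * (ρ - s) ^ (β - 3 / 2) := by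
        rw [show β - 3 / 2 = β + -(3 : ℝ) / 2 by ring, rpow_add hρs]
        ring

theorem intervalIntegrable_holmgrenIntegrand_and_abs_integral_le_lowerHalf (hβ : 1 / 2 < β)
    (hM : 0 ≤ M) (hst : s < t) (hΦ : ContinuousOn Φ₀ (Icc s t))
    (hH : ∀ ρ ∈ Ioo s t, |Φ₀ ρ - Φ₀ s| ≤ M * (t - ρ) ^ (-β) * (ρ - s) ^ β) :
    IntervalIntegrable (holmgrenIntegrand Φ₀ s) volume s ((s + t) / 2) ∧
      |∫ ρ in s..(s + t) / 2, holmgrenIntegrand Φ₀ s ρ|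
        ≤ M * ((t - s) / 2) ^ (-(1 : ℝ) / 2) / (β - 1 / 2) := by
  have hsm : s ≤ (s + t) / 2 := by linarith
  have hr : -1 < β - 3 / 2 := by linarith
  have hle : ∀ ρ ∈ Ioc s ((s + t) / 2), |holmgrenIntegrand Φ₀ s ρ|
      ≤ M * ((t - s) / 2) ^ (-β) * (ρ - s) ^ (β - 3 / 2) := fun ρ hρ =>
    abs_holmgrenIntegrand_le_of_holder (by linarith) hM hρ (hH ρ ⟨hρ.1, by linarith [hρ.2]⟩)
  refine ⟨intervalIntegrable_of_abs_le_mul_rpow_sub_left hr hsm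
    (continuousOn_holmgrenIntegrand hΦ (Ioc_subset_Ioc_right (by linarith))) hle, ?_⟩
  have hd : 0 < (t - s) / 2 := by linarith
  convert abs_integral_le_of_abs_le_mul_rpow_sub_left hr (by positivity) hsm hle using 1
  rw [show (s + t) / 2 - s = (t - s) / 2 by ring, show β - 3 / 2 + 1 = β - 1 / 2 by ring,
    mul_assoc M, ← rpow_add hd]
  ring_nf

theorem intervalIntegrable_holmgrenIntegrand_and_abs_integral_le_upperHalf (hM : 0 ≤ M)
    (hst : s < t) (hΦ : ContinuousOn Φ₀ (Icc s t)) (hbound : ∀ ρ ∈ Icc s t, |Φ₀ ρ| ≤ M) :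
    IntervalIntegrable (holmgrenIntegrand Φ₀ s) volume ((s + t) / 2) t ∧
      |∫ ρ in (s + t) / 2..t, holmgrenIntegrand Φ₀ s ρ|
        ≤ 4 * M * ((t - s) / 2) ^ (-(1 : ℝ) / 2) := by
  have hmt : (s + t) / 2 ≤ t := by linarith
  refine ⟨ContinuousOn.intervalIntegrable ?_, ?_⟩
  · rw [uIcc_of_le hmt]
    exact continuousOn_holmgrenIntegrand hΦ fun ρ hρ => ⟨by linarith [hρ.1], hρ.2⟩
  have hle : ∀ ρ ∈ Ioc ((s + t) / 2) t, |holmgrenIntegrand Φ₀ s ρ|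
      ≤ 2 * M * (ρ - s) ^ (-(3 : ℝ) / 2) := by
    intro ρ hρ
    have hρs : 0 < ρ - s := by linarith [hρ.1]
    rw [holmgrenIntegrand, abs_mul, abs_of_pos (rpow_pos_of_pos hρs _), mul_comm]
    gcongr
    calc |Φ₀ ρ - Φ₀ s| ≤ |Φ₀ ρ| + |Φ₀ s| := abs_sub _ _
      _ ≤ 2 * M := by linarith [hbound ρ ⟨by linarith, hρ.2⟩, hbound s ⟨le_rfl, hst.le⟩]
  convert abs_integral_le_of_abs_le_mul_rpow_sub_of_lt_neg_one (by norm_num) (by positivity)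
    (by linarith) hmt hle using 1
  rw [show (s + t) / 2 - s = (t - s) / 2 by ring]
  norm_num
  ring

theorem intervalIntegrable_holmgrenIntegrand_and_abs_integral_le (hβ : 1 / 2 < β) (hM : 0 ≤ M)
    (hst : s < t) (hΦ : ContinuousOn Φ₀ (Icc s t)) (hbound : ∀ ρ ∈ Icc s t, |Φ₀ ρ| ≤ M)
    (hH : ∀ ρ ∈ Ioo s t, |Φ₀ ρ - Φ₀ s| ≤ M * (t - ρ) ^ (-β) * (ρ - s) ^ β) :
    IntervalIntegrable (holmgrenIntegrand Φ₀ s) volume s t ∧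
      |∫ ρ in s..t, holmgrenIntegrand Φ₀ s ρ|
        ≤ (1 / (β - 1 / 2) + 4) * M * ((t - s) / 2) ^ (-(1 : ℝ) / 2) := by
  obtain ⟨hint₁, hI₁⟩ :=
    intervalIntegrable_holmgrenIntegrand_and_abs_integral_le_lowerHalf hβ hM hst hΦ hH
  obtain ⟨hint₂, hI₂⟩ :=
    intervalIntegrable_holmgrenIntegrand_and_abs_integral_le_upperHalf hM hst hΦ hbound
  refine ⟨hint₁.trans hint₂, ?_⟩
  rw [← integral_add_adjacent_intervals hint₁ hint₂]
  calc _ ≤ _ := abs_add_le _ _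
    _ ≤ _ := add_le_add hI₁ hI₂
    _ = _ := by ring

end HolmgrenIntegrand

theorem holmgren_transform_estimate_general (C α nφ t : ℝ)
    (hC : 0 < C) (hα0 : 0 < α) (hnφ : 0 ≤ nφ)
    (Φ₀ : ℝ → ℝ)
    (hcont : ContinuousOn Φ₀ (Set.Icc 0 t))
    (hbound : ∀ s ∈ Set.Icc (0:ℝ) t, |Φ₀ s| ≤ C * nφ)
    (hHolder : ∀ s ρ : ℝ, 0 ≤ s → s < ρ → ρ < t →
      |Φ₀ ρ - Φ₀ s| ≤ C * nφ * (t - ρ) ^ (-((1 + α)/2)) * (ρ - s) ^ ((1 + α)/2)) :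
    ∃ C' : ℝ, 0 < C' ∧ ∀ s : ℝ, 0 ≤ s → s < t →
      IntervalIntegrable (fun ρ => (ρ - s) ^ (-(3:ℝ)/2) * (Φ₀ ρ - Φ₀ s)) volume s t ∧
      |(2 * Real.pi) ^ (-(1:ℝ)/2) * (∫ ρ in s..t, (ρ - s) ^ (-(3:ℝ)/2) * (Φ₀ ρ - Φ₀ s))
          - Real.sqrt (2 / Real.pi) * (t - s) ^ (-(1:ℝ)/2) * Φ₀ s|
        ≤ C' * nφ * (t - s) ^ (-(1:ℝ)/2) := by
  refine ⟨C * ((2 / α + 4) * √2 + 1), by positivity, fun s hs hst => ?_⟩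
  obtain ⟨hint, hI⟩ := intervalIntegrable_holmgrenIntegrand_and_abs_integral_le
    (β := (1 + α) / 2) (by linarith) (by positivity) hst (hcont.mono (Icc_subset_Icc_left hs))
    (fun ρ hρ => hbound ρ ⟨hs.trans hρ.1, hρ.2⟩) (fun ρ hρ => hHolder s ρ hs hρ.1 hρ.2)
  refine ⟨hint, ?_⟩
  have hd : 0 ≤ (t - s) ^ (-(1:ℝ)/2) := rpow_nonneg (sub_nonneg.2 hst.le) _
  rw [show (1 + α) / 2 - 1 / 2 = α / 2 by ring, one_div_div,
    rpow_neg_one_half_div_two (sub_nonneg.2 hst.le)] at hI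
  have hpre : (2 * π) ^ (-(1:ℝ)/2) ≤ 1 :=
    rpow_le_one_of_one_le_of_nonpos (by nlinarith [pi_gt_three]) (by norm_num)
  have hsqrt : √(2 / π) ≤ 1 := sqrt_le_one.2 ((div_le_one pi_pos).2 (by linarith [pi_gt_three]))
  have hΦs : |Φ₀ s| ≤ C * nφ := hbound s ⟨hs, hst.le⟩
  set I := ∫ ρ in s..t, holmgrenIntegrand Φ₀ s ρ
  calc _ ≤ |(2 * π) ^ (-(1:ℝ)/2) * I| + |√(2 / π) * (t - s) ^ (-(1:ℝ)/2) * Φ₀ s| :=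
        abs_sub _ _
    _ ≤ |I| + (t - s) ^ (-(1:ℝ)/2) * (C * nφ) := by
        rw [abs_mul, abs_mul, abs_mul, abs_of_nonneg (rpow_nonneg (by positivity) _),
          abs_of_nonneg (sqrt_nonneg _), abs_of_nonneg hd]
        gcongr
        · exact mul_le_of_le_one_left (abs_nonneg _) hpre
        · exact mul_le_of_le_one_left hd hsqrt
    _ ≤ (2 / α + 4) * (C * nφ) * (√2 * (t - s) ^ (-(1:ℝ)/2))
          + (t - s) ^ (-(1:ℝ)/2) * (C * nφ) := by
        gcongr
    _ = _ := by ring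

theorem holmgren_transform_estimate (C α nφ t : ℝ)
    (hC : 0 < C) (hα0 : 0 < α) (hα1 : α < 1) (hnφ : 0 ≤ nφ) (ht : 0 < t)
    (Φ₀ : ℝ → ℝ)
    (hcont : ContinuousOn Φ₀ (Set.Icc 0 t))
    (hlim : Filter.Tendsto Φ₀ (nhdsWithin t (Set.Iio t)) (nhds 0))
    (hbound : ∀ s ∈ Set.Icc (0:ℝ) t, |Φ₀ s| ≤ C * nφ)
    (hHolder : ∀ s ρ : ℝ, 0 ≤ s → s < ρ → ρ < t →
      |Φ₀ ρ - Φ₀ s| ≤ C * nφ * (t - ρ) ^ (-((1 + α)/2)) * (ρ - s) ^ ((1 + α)/2)) :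
    ∃ C' : ℝ, 0 < C' ∧ ∀ s : ℝ, 0 ≤ s → s < t →
      IntervalIntegrable (fun ρ => (ρ - s) ^ (-(3:ℝ)/2) * (Φ₀ ρ - Φ₀ s)) volume s t ∧
      |(2 * Real.pi) ^ (-(1:ℝ)/2) * (∫ ρ in s..t, (ρ - s) ^ (-(3:ℝ)/2) * (Φ₀ ρ - Φ₀ s))
          - Real.sqrt (2 / Real.pi) * (t - s) ^ (-(1:ℝ)/2) * Φ₀ s|
        ≤ C' * nφ * (t - s) ^ (-(1:ℝ)/2) :=
  holmgren_transform_estimate_general C α nφ t hC hα0 hnφ Φ₀ hcont hbound hHolder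
end

section
/- Let b > 0, B ≥ b. For s < τ < t, θ ∈ (0,1), and z ∈ ℝ, the kernel bound |N^{(2)}(s,τ)| ≤ K (τ-s)^{-3/2} ∫ z² exp(-θ(1-θ)z²/(2B(τ-s))) dν(z) dθ integrated against (t-τ)^{-1/2} over τ ∈ (s,t) yields ∫_s^t (t-τ)^{-1/2}|N^{(2)}(s,τ)| dτ ≤ K (2πB)^{1/2}(t-s)^{-1/2} ∫ |z| dν(z) · ∫_0^1 (θ(1-θ))^{-1/2} dθ = K π (2πB)^{1/2} (t-s)^{-1/2} ∫ |z| dν(z), for any finite nonnegative measure ν with ∫|z| dν(z) < ∞. -/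
/-!
Bound everything pointwise by nonnegative integrands and work with lower Lebesgue integrals, so
that Tonelli lets us integrate in `τ` first, for fixed `z` and `θ`. The substitution
`τ = s + 1 / (x + 1 / (t - s))` maps `(0, ∞)` onto `(s, t)` and turns
`∫ₛᵗ (t - τ)^{-1/2} (τ - s)^{-3/2} e^{-c/(τ - s)} dτ` into
`(t - s)^{-1/2} e^{-c/(t - s)} ∫₀^∞ x^{-1/2} e^{-cx} dx = √(π/c) (t - s)^{-1/2} e^{-c/(t - s)}`.
With `c = θ(1-θ)z²/(2B)` the factor `z² √(π/c)` is `√(2πB) |z| / √(θ(1-θ))`, and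
`∫₀¹ (θ(1-θ))^{-1/2} dθ = π` since `arcsin (2θ - 1)` is an antiderivative.
-/

open Real MeasureTheory Set

lemma ofReal_integral_le_lintegral_ofReal {α : Type*} [MeasurableSpace α] {μ : Measure α}
    {f : α → ℝ} (hf : 0 ≤ᵐ[μ] f) :
    ENNReal.ofReal (∫ a, f a ∂μ) ≤ ∫⁻ a, ENNReal.ofReal (f a) ∂μ := by
  by_cases hm : AEStronglyMeasurable f μ
  · rw [integral_eq_lintegral_of_nonneg_ae hf hm]
    exact ENNReal.ofReal_toReal_le
  · simp [integral_undef (fun h => hm h.1)]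

lemma ofReal_integral_intervalIntegral_le {α : Type*} [MeasurableSpace α] {μ : Measure α}
    {a b : ℝ} (hab : a ≤ b) {g : α → ℝ → ℝ} (hg : ∀ z θ, 0 ≤ g z θ) :
    ENNReal.ofReal (∫ z, (∫ θ in a..b, g z θ) ∂μ)
      ≤ ∫⁻ z, (∫⁻ θ in Ioo a b, ENNReal.ofReal (g z θ)) ∂μ :=
  calc _ ≤ ∫⁻ z, ENNReal.ofReal (∫ θ in a..b, g z θ) ∂μ :=
        ofReal_integral_le_lintegral_ofReal
          (ae_of_all _ fun z => intervalIntegral.integral_nonneg hab fun θ _ => hg z θ)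
    _ ≤ _ := lintegral_mono fun z => by
        rw [intervalIntegral.integral_of_le hab, integral_Ioc_eq_integral_Ioo]
        exact ofReal_integral_le_lintegral_ofReal (ae_of_all _ (hg z))

lemma lintegral_lintegral_lintegral_swap {α β γ : Type*} [MeasurableSpace α] [MeasurableSpace β]
    [MeasurableSpace γ] {μ : Measure α} {ν : Measure β} {ρ : Measure γ} [SFinite μ] [SFinite ν]
    [SFinite ρ] {f : α → β → γ → ENNReal}
    (hf : Measurable fun p : (α × β) × γ => f p.1.1 p.1.2 p.2) :
    ∫⁻ x, ∫⁻ y, ∫⁻ z, f x y z ∂ρ ∂ν ∂μ = ∫⁻ y, ∫⁻ z, ∫⁻ x, f x y z ∂μ ∂ρ ∂ν := by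
  rw [lintegral_lintegral_swap hf.lintegral_prod_right'.aemeasurable]
  refine lintegral_congr fun y => lintegral_lintegral_swap ?_
  exact (hf.comp (by fun_prop : Measurable fun q : α × γ => ((q.1, y), q.2))).aemeasurable

lemma hasDerivAt_arcsin_two_mul_sub_one {θ : ℝ} (hθ : θ ∈ Ioo (0 : ℝ) 1) :
    HasDerivAt (fun x => arcsin (2 * x - 1)) (√(θ * (1 - θ)))⁻¹ θ := by
  have h := (hasDerivAt_arcsin (x := 2 * θ - 1) (by linarith [hθ.1]) (by linarith [hθ.2])).comp θ
    (((hasDerivAt_id' θ).const_mul 2).sub_const 1)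
  refine h.congr_deriv ?_
  have hsq : 1 - (2 * θ - 1) ^ 2 = 2 ^ 2 * (θ * (1 - θ)) := by ring
  have hpos : 0 < √(θ * (1 - θ)) := sqrt_pos.2 (mul_pos hθ.1 (by linarith [hθ.2]))
  rw [hsq, sqrt_mul (by norm_num), sqrt_sq (by norm_num)]
  field_simp

lemma lintegral_inv_sqrt_mul_one_sub :
    ∫⁻ θ in Ioo (0 : ℝ) 1, ENNReal.ofReal (√(θ * (1 - θ)))⁻¹ = ENNReal.ofReal π := by
  have hcont : ContinuousOn (fun x : ℝ => arcsin (2 * x - 1)) (Icc 0 1) := by fun_prop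
  have hnonneg : ∀ θ ∈ Ioo (0 : ℝ) 1, 0 ≤ (√(θ * (1 - θ)))⁻¹ := fun _ _ => by positivity
  have hint := intervalIntegral.integrableOn_deriv_of_nonneg hcont
    (fun θ hθ => hasDerivAt_arcsin_two_mul_sub_one hθ) hnonneg
  have hFTC := intervalIntegral.integral_eq_sub_of_hasDerivAt_of_le zero_le_one hcont
    (fun θ hθ => hasDerivAt_arcsin_two_mul_sub_one hθ)
    ((intervalIntegrable_iff_integrableOn_Ioc_of_le zero_le_one).2 hint)
  rw [intervalIntegral.integral_of_le zero_le_one, integral_Ioc_eq_integral_Ioo] at hFTC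
  rw [← ofReal_integral_eq_lintegral_ofReal (hint.mono_set Ioo_subset_Ioc_self)
    ((ae_restrict_mem measurableSet_Ioo).mono hnonneg), hFTC]
  norm_num

lemma lintegral_rpow_neg_half_mul_exp_neg_mul {c : ℝ} (hc : 0 < c) :
    ∫⁻ x in Ioi (0 : ℝ), ENNReal.ofReal (x ^ (-(1 : ℝ) / 2) * exp (-(c * x)))
      = ENNReal.ofReal √(π / c) := by
  have hint : IntegrableOn (fun x : ℝ => x ^ (-(1 : ℝ) / 2) * exp (-(c * x))) (Ioi 0) := by
    simpa [rpow_one] using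
      integrableOn_rpow_mul_exp_neg_mul_rpow (p := 1) (s := -(1 : ℝ) / 2) (by norm_num) one_pos hc
  have hval := integral_rpow_mul_exp_neg_mul_Ioi (a := 1 / 2) one_half_pos hc
  rw [show (1 / 2 : ℝ) - 1 = -1 / 2 by norm_num, Gamma_one_half_eq, ← sqrt_eq_rpow] at hval
  rw [← ofReal_integral_eq_lintegral_ofReal hint
    ((ae_restrict_mem measurableSet_Ioi).mono fun x hx => by simp only [mem_Ioi] at hx; positivity),
    hval, ← sqrt_mul (by positivity), one_div_mul_eq_div]

lemma image_Ioi_const_add_inv_add_inv {s m : ℝ} (hm : 0 < m) :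
    (fun x => s + (x + m⁻¹)⁻¹) '' Ioi 0 = Ioo s (s + m) := by
  have h : (fun x => s + (x + m⁻¹)⁻¹) = (s + ·) ∘ Inv.inv ∘ (· + m⁻¹) := rfl
  rw [h, image_comp, image_comp, image_add_const_Ioi, zero_add, image_inv_eq_inv,
    inv_Ioi₀ (inv_pos.2 hm), inv_inv, image_const_add_Ioo, add_zero]

lemma rpow_integrand_comp_inv_add_inv {m x c : ℝ} (hm : 0 < m) (hx : 0 < x) :
    ((x + m⁻¹) ^ 2)⁻¹ * ((m - (x + m⁻¹)⁻¹) ^ (-(1:ℝ)/2) * ((x + m⁻¹)⁻¹) ^ (-(3:ℝ)/2) *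
      exp (-c / (x + m⁻¹)⁻¹))
      = m ^ (-(1:ℝ)/2) * exp (-c / m) * (x ^ (-(1:ℝ)/2) * exp (-(c * x))) := by
  set w := x + m⁻¹ with hw
  have hw0 : 0 < w := by positivity
  have hmw : m - w⁻¹ = m * x * w⁻¹ := by
    rw [hw]; field_simp; ring
  have hpow : (w⁻¹) ^ (-(1:ℝ)/2) * (w⁻¹) ^ (-(3:ℝ)/2) = w ^ 2 := by
    rw [← rpow_add (by positivity), inv_rpow hw0.le, ← rpow_neg hw0.le]
    norm_num
  have hexp : exp (-c / w⁻¹) = exp (-c / m) * exp (-(c * x)) := by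
    rw [← exp_add, hw]; congr 1; field_simp; ring
  rw [hmw, mul_rpow (by positivity) (by positivity), mul_rpow hm.le hx.le, hexp]
  calc _ = m ^ (-(1:ℝ)/2) * exp (-c / m) * (x ^ (-(1:ℝ)/2) * exp (-(c * x))) *
        (((w ^ 2)⁻¹) * ((w⁻¹) ^ (-(1:ℝ)/2) * (w⁻¹) ^ (-(3:ℝ)/2))) := by ring
    _ = _ := by rw [hpow, inv_mul_cancel₀ (by positivity), mul_one]

lemma lintegral_Ioo_rpow_mul_rpow_mul_exp {s t c : ℝ} (hst : s < t) (hc : 0 < c) :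
    ∫⁻ τ in Ioo s t,
        ENNReal.ofReal ((t - τ) ^ (-(1:ℝ)/2) * (τ - s) ^ (-(3:ℝ)/2) * exp (-c / (τ - s)))
      = ENNReal.ofReal (√(π / c) * (t - s) ^ (-(1:ℝ)/2) * exp (-c / (t - s))) := by
  obtain ⟨m, hm, rfl⟩ : ∃ m, 0 < m ∧ t = s + m := ⟨t - s, sub_pos.2 hst, by ring⟩
  have hderiv : ∀ x ∈ Ioi (0:ℝ), HasDerivWithinAt (fun x => s + (x + m⁻¹)⁻¹)
      (-1 / (x + m⁻¹) ^ 2) (Ioi 0) x := fun x hx =>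
    ((((hasDerivAt_id' x).add_const m⁻¹).inv
      (by simp only [mem_Ioi] at hx; positivity)).const_add s).hasDerivWithinAt
  have hinj : InjOn (fun x => s + (x + m⁻¹)⁻¹) (Ioi 0) := fun x _ y _ hxy => by
    simpa using hxy
  rw [← image_Ioi_const_add_inv_add_inv hm,
    lintegral_image_eq_lintegral_abs_deriv_mul measurableSet_Ioi hderiv hinj]
  calc _ = ∫⁻ x in Ioi (0:ℝ), ENNReal.ofReal (m ^ (-(1:ℝ)/2) * exp (-c / m)) *
        ENNReal.ofReal (x ^ (-(1:ℝ)/2) * exp (-(c * x))) := by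
        refine setLIntegral_congr_fun measurableSet_Ioi fun x hx => ?_
        have hw : 0 < x + m⁻¹ := by simp only [mem_Ioi] at hx; positivity
        rw [← ENNReal.ofReal_mul (abs_nonneg _), ← ENNReal.ofReal_mul (by positivity),
          ← rpow_integrand_comp_inv_add_inv hm hx]
        simp only [abs_div, abs_neg, abs_one, abs_pow, abs_of_pos hw, add_sub_add_left_eq_sub,
          add_sub_cancel_left]
        ring_nf
    _ = _ := by
      rw [lintegral_const_mul' _ _ ENNReal.ofReal_ne_top,
        lintegral_rpow_neg_half_mul_exp_neg_mul hc, ← ENNReal.ofReal_mul (by positivity)]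
      congr 1
      ring_nf

noncomputable def strongSingularIntegrand (B s t τ z θ : ℝ) : ℝ :=
  (t - τ) ^ (-(1:ℝ)/2) * (τ - s) ^ (-(3:ℝ)/2) *
    (z ^ 2 * exp (-(θ * (1 - θ) * z ^ 2) / (2 * B * (τ - s))))

lemma sq_mul_sqrt_pi_div_eq {B z θ : ℝ} (hB : 0 < B) (hz : z ≠ 0) (hθ : θ ∈ Ioo (0:ℝ) 1) :
    z ^ 2 * √(π / (θ * (1 - θ) * z ^ 2 / (2 * B)))
      = √(2 * π * B) * |z| * (√(θ * (1 - θ)))⁻¹ := by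
  have hθθ : 0 < θ * (1 - θ) := mul_pos hθ.1 (by linarith [hθ.2])
  have hzabs : 0 < |z| := abs_pos.2 hz
  have hsqrt : 0 < √(θ * (1 - θ)) := sqrt_pos.2 hθθ
  rw [div_div_eq_mul_div, sqrt_div' _ (by positivity), sqrt_mul hθθ.le, sqrt_sq_eq_abs,
    ← sq_abs z, show π * (2 * B) = 2 * π * B by ring]
  field_simp

lemma lintegral_strongSingularIntegrand_le {B s t z θ : ℝ} (hB : 0 < B) (hst : s < t)
    (hθ : θ ∈ Ioo (0:ℝ) 1) :
    ∫⁻ τ in Ioo s t, ENNReal.ofReal (strongSingularIntegrand B s t τ z θ)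
      ≤ ENNReal.ofReal (√(2 * π * B) * (t - s) ^ (-(1:ℝ)/2) * |z| * (√(θ * (1 - θ)))⁻¹) := by
  rcases eq_or_ne z 0 with rfl | hz
  · simp [strongSingularIntegrand]
  set c := θ * (1 - θ) * z ^ 2 / (2 * B) with hc_def
  have hc : 0 < c := by
    have := hθ.1
    have : 0 < 1 - θ := by linarith [hθ.2]
    positivity
  have hfactor : ∀ τ, strongSingularIntegrand B s t τ z θ
      = z ^ 2 * ((t - τ) ^ (-(1:ℝ)/2) * (τ - s) ^ (-(3:ℝ)/2) * exp (-c / (τ - s))) := by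
    intro τ
    have hexp : -(θ * (1 - θ) * z ^ 2) / (2 * B * (τ - s)) = -c / (τ - s) := by
      rw [hc_def, neg_div, neg_div, div_div]
    rw [strongSingularIntegrand, hexp]
    ring
  simp_rw [hfactor, ENNReal.ofReal_mul (sq_nonneg z)]
  rw [lintegral_const_mul' _ _ ENNReal.ofReal_ne_top, lintegral_Ioo_rpow_mul_rpow_mul_exp hst hc,
    ← ENNReal.ofReal_mul (sq_nonneg z)]
  refine ENNReal.ofReal_le_ofReal ?_
  calc z ^ 2 * (√(π / c) * (t - s) ^ (-(1:ℝ)/2) * exp (-c / (t - s)))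
      ≤ z ^ 2 * √(π / c) * (t - s) ^ (-(1:ℝ)/2) := by
        rw [← mul_assoc, ← mul_assoc]
        refine mul_le_of_le_one_right (by positivity) ?_
        exact exp_le_one_iff.2 (div_nonpos_of_nonpos_of_nonneg (by linarith) (by linarith))
    _ = _ := by rw [hc_def, sq_mul_sqrt_pi_div_eq hB hz hθ]; ring

lemma lintegral_Ioo_lintegral_strongSingularIntegrand_le {B s t : ℝ} (hB : 0 < B) (hst : s < t)
    (z : ℝ) :
    ∫⁻ θ in Ioo (0:ℝ) 1, ∫⁻ τ in Ioo s t, ENNReal.ofReal (strongSingularIntegrand B s t τ z θ)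
      ≤ ENNReal.ofReal (π * √(2 * π * B) * (t - s) ^ (-(1:ℝ)/2)) * ENNReal.ofReal |z| := by
  have hts : 0 ≤ t - s := (sub_pos.2 hst).le
  have hC : 0 ≤ √(2 * π * B) * (t - s) ^ (-(1:ℝ)/2) * |z| := by positivity
  calc _ ≤ ∫⁻ θ in Ioo (0:ℝ) 1, ENNReal.ofReal (√(2 * π * B) * (t - s) ^ (-(1:ℝ)/2) * |z|) *
        ENNReal.ofReal (√(θ * (1 - θ)))⁻¹ :=
        setLIntegral_mono' measurableSet_Ioo fun θ hθ =>
          (lintegral_strongSingularIntegrand_le hB hst hθ).trans_eq (ENNReal.ofReal_mul hC)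
    _ = _ := by
      rw [lintegral_const_mul' _ _ ENNReal.ofReal_ne_top, lintegral_inv_sqrt_mul_one_sub,
        ← ENNReal.ofReal_mul hC, ← ENNReal.ofReal_mul (by positivity)]
      ring_nf

lemma ofReal_rpow_mul_abs_le_lintegral_strongSingularIntegrand {K B s t τ N : ℝ} (hK : 0 < K)
    (hτ : τ ∈ Ioo s t) {ν : Measure ℝ}
    (hN : |N| ≤ K * (τ - s) ^ (-(3:ℝ)/2) * ∫ z, z ^ 2 *
      (∫ θ in (0:ℝ)..1, exp (-(θ * (1 - θ) * z ^ 2) / (2 * B * (τ - s)))) ∂ν) :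
    ENNReal.ofReal ((t - τ) ^ (-(1:ℝ)/2) * |N|) ≤ ENNReal.ofReal K *
      ∫⁻ z, (∫⁻ θ in Ioo (0:ℝ) 1, ENNReal.ofReal (strongSingularIntegrand B s t τ z θ)) ∂ν := by
  have hsτ : 0 ≤ τ - s := (sub_pos.2 hτ.1).le
  have hτt : 0 ≤ t - τ := (sub_pos.2 hτ.2).le
  have hpull : (t - τ) ^ (-(1:ℝ)/2) * (K * (τ - s) ^ (-(3:ℝ)/2) * ∫ z, z ^ 2 *
      (∫ θ in (0:ℝ)..1, exp (-(θ * (1 - θ) * z ^ 2) / (2 * B * (τ - s)))) ∂ν)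
      = K * ∫ z, (∫ θ in (0:ℝ)..1, strongSingularIntegrand B s t τ z θ) ∂ν := by
    simp only [strongSingularIntegrand, intervalIntegral.integral_const_mul, integral_const_mul]
    ring
  calc _ ≤ ENNReal.ofReal (K * ∫ z, (∫ θ in (0:ℝ)..1, strongSingularIntegrand B s t τ z θ) ∂ν) :=
        ENNReal.ofReal_le_ofReal (hpull ▸ mul_le_mul_of_nonneg_left hN (rpow_nonneg hτt _))
    _ ≤ _ := by
        rw [ENNReal.ofReal_mul hK.le]
        gcongr
        exact ofReal_integral_intervalIntegral_le zero_le_one fun z θ => by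
          unfold strongSingularIntegrand; positivity

theorem strongly_singular_kernel_contribution (K b B s t : ℝ)
    (hK : 0 < K) (hb : 0 < b) (hbB : b ≤ B) (hst : s < t)
    (ν : Measure ℝ) (hν : IsFiniteMeasure ν)
    (hmom : Integrable (fun z : ℝ => |z|) ν)
    (N2 : ℝ → ℝ)
    (hN2 : ∀ τ : ℝ, s < τ → τ < t →
      |N2 τ| ≤ K * (τ - s) ^ (-(3:ℝ)/2) *
        ∫ z, z ^ 2 * (∫ θ in (0:ℝ)..1,
          Real.exp (-(θ * (1 - θ) * z ^ 2) / (2 * B * (τ - s)))) ∂ν) :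
    (∫ τ in s..t, (t - τ) ^ (-(1:ℝ)/2) * |N2 τ|)
      ≤ K * Real.pi * Real.sqrt (2 * Real.pi * B) * (t - s) ^ (-(1:ℝ)/2) * ∫ z, |z| ∂ν := by
  have hB : 0 < B := hb.trans_le hbB
  have hts : 0 ≤ t - s := (sub_pos.2 hst).le
  have hC : 0 ≤ π * √(2 * π * B) * (t - s) ^ (-(1:ℝ)/2) := by positivity
  rw [intervalIntegral.integral_of_le hst.le, integral_Ioc_eq_integral_Ioo,
    ← ENNReal.ofReal_le_ofReal_iff (by positivity)]
  calc _ ≤ ∫⁻ τ in Ioo s t, ENNReal.ofReal ((t - τ) ^ (-(1:ℝ)/2) * |N2 τ|) :=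
        ofReal_integral_le_lintegral_ofReal <| (ae_restrict_mem measurableSet_Ioo).mono
          fun τ hτ => mul_nonneg (rpow_nonneg (sub_pos.2 hτ.2).le _) (abs_nonneg _)
    _ ≤ ∫⁻ τ in Ioo s t, ENNReal.ofReal K *
        ∫⁻ z, (∫⁻ θ in Ioo (0:ℝ) 1, ENNReal.ofReal (strongSingularIntegrand B s t τ z θ)) ∂ν :=
        setLIntegral_mono' measurableSet_Ioo fun τ hτ =>
          ofReal_rpow_mul_abs_le_lintegral_strongSingularIntegrand hK hτ (hN2 τ hτ.1 hτ.2)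
    _ = ENNReal.ofReal K * ∫⁻ z, (∫⁻ θ in Ioo (0:ℝ) 1,
        ∫⁻ τ in Ioo s t, ENNReal.ofReal (strongSingularIntegrand B s t τ z θ)) ∂ν := by
        rw [lintegral_const_mul' _ _ ENNReal.ofReal_ne_top, lintegral_lintegral_lintegral_swap]
        unfold strongSingularIntegrand
        fun_prop
    _ ≤ ENNReal.ofReal K * ∫⁻ z, ENNReal.ofReal (π * √(2 * π * B) * (t - s) ^ (-(1:ℝ)/2)) *
        ENNReal.ofReal |z| ∂ν := by
        gcongr with z
        exact lintegral_Ioo_lintegral_strongSingularIntegrand_le hB hst z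
    _ = _ := by
        rw [lintegral_const_mul' _ _ ENNReal.ofReal_ne_top, ← ofReal_integral_eq_lintegral_ofReal
          hmom (ae_of_all _ fun z => abs_nonneg z), ← ENNReal.ofReal_mul hC,
          ← ENNReal.ofReal_mul hK.le]
        ring_nf
end
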